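/- arXiv:math/0008185 — 7 statements merged into one kernel-verified Lean document; each statement's English description precedes it below -/
import Mathlib

section
/- Let G be a group with elements a₁, b, a₂, b₁, c satisfying a₁ba₁ = ba₁b, a₂ba₂ = ba₂b, a₂b₁a₂ = b₁a₂b₁, b₁cb₁ = cb₁c, and suppose every other pair among {a₁, b, a₂, b₁, c} commutes, i.e., a₁ commutes with a₂, b₁, c; b commutes with b₁, c; and a₂ commutes with c. Suppose further (a₁a₁a₂b)³ = c². Then the element D = a₁ba₂b₁c·a₁ba₂b₁·a₁ba₂·a₁b·a₁ satisfies D a₁ D⁻¹ = c, D b D⁻¹ = b₁, D a₂ D⁻¹ = a₂, D b₁ D⁻¹ = b, and D c D⁻¹ = a₁. -/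
theorem stmt_0 (G : Type*) [Group G] (a₁ b a₂ b₁ c : G)
    (h1 : a₁*b*a₁ = b*a₁*b) (h2 : a₂*b*a₂ = b*a₂*b)
    (h3 : a₂*b₁*a₂ = b₁*a₂*b₁) (h4 : b₁*c*b₁ = c*b₁*c)
    (c1 : a₁*a₂ = a₂*a₁) (c2 : a₁*b₁ = b₁*a₁) (c3 : a₁*c = c*a₁)
    (c4 : b*b₁ = b₁*b) (c5 : b*c = c*b) (c6 : a₂*c = c*a₂)
    (star : (a₁*a₁*a₂*b)^3 = c^2) :
    (a₁*b*a₂*b₁*c*a₁*b*a₂*b₁*a₁*b*a₂*a₁*b*a₁) * a₁ * (a₁*b*a₂*b₁*c*a₁*b*a₂*b₁*a₁*b*a₂*a₁*b*a₁)⁻¹ = c ∧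
    (a₁*b*a₂*b₁*c*a₁*b*a₂*b₁*a₁*b*a₂*a₁*b*a₁) * b * (a₁*b*a₂*b₁*c*a₁*b*a₂*b₁*a₁*b*a₂*a₁*b*a₁)⁻¹ = b₁ ∧
    (a₁*b*a₂*b₁*c*a₁*b*a₂*b₁*a₁*b*a₂*a₁*b*a₁) * a₂ * (a₁*b*a₂*b₁*c*a₁*b*a₂*b₁*a₁*b*a₂*a₁*b*a₁)⁻¹ = a₂ ∧
    (a₁*b*a₂*b₁*c*a₁*b*a₂*b₁*a₁*b*a₂*a₁*b*a₁) * b₁ * (a₁*b*a₂*b₁*c*a₁*b*a₂*b₁*a₁*b*a₂*a₁*b*a₁)⁻¹ = b ∧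
    (a₁*b*a₂*b₁*c*a₁*b*a₂*b₁*a₁*b*a₂*a₁*b*a₁) * c * (a₁*b*a₂*b₁*c*a₁*b*a₂*b₁*a₁*b*a₂*a₁*b*a₁)⁻¹ = a₁ := by
  have B12t : ∀ t : G, a₁ * (b * (a₁ * t)) = b * (a₁ * (b * t)) := fun t => by simp only [← mul_assoc]; rw [h1]
  have B12n : a₁ * (b * a₁) = b * (a₁ * b) := by simp only [← mul_assoc]; rw [h1]
  have B23t : ∀ t : G, b * (a₂ * (b * t)) = a₂ * (b * (a₂ * t)) := fun t => by simp only [← mul_assoc]; rw [h2]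
  have B23n : b * (a₂ * b) = a₂ * (b * a₂) := by simp only [← mul_assoc]; rw [h2]
  have B34t : ∀ t : G, a₂ * (b₁ * (a₂ * t)) = b₁ * (a₂ * (b₁ * t)) := fun t => by simp only [← mul_assoc]; rw [h3]
  have B34n : a₂ * (b₁ * a₂) = b₁ * (a₂ * b₁) := by simp only [← mul_assoc]; rw [h3]
  have B45t : ∀ t : G, b₁ * (c * (b₁ * t)) = c * (b₁ * (c * t)) := fun t => by simp only [← mul_assoc]; rw [h4]
  have B45n : b₁ * (c * b₁) = c * (b₁ * c) := by simp only [← mul_assoc]; rw [h4]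
  have C13t : ∀ t : G, a₁ * (a₂ * t) = a₂ * (a₁ * t) := fun t => by rw [← mul_assoc, c1, mul_assoc]
  have C13n : a₁ * a₂ = a₂ * a₁ := c1
  have C14t : ∀ t : G, a₁ * (b₁ * t) = b₁ * (a₁ * t) := fun t => by rw [← mul_assoc, c2, mul_assoc]
  have C14n : a₁ * b₁ = b₁ * a₁ := c2
  have C15t : ∀ t : G, a₁ * (c * t) = c * (a₁ * t) := fun t => by rw [← mul_assoc, c3, mul_assoc]
  have C15n : a₁ * c = c * a₁ := c3
  have C24t : ∀ t : G, b * (b₁ * t) = b₁ * (b * t) := fun t => by rw [← mul_assoc, c4, mul_assoc]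
  have C24n : b * b₁ = b₁ * b := c4
  have C25t : ∀ t : G, b * (c * t) = c * (b * t) := fun t => by rw [← mul_assoc, c5, mul_assoc]
  have C25n : b * c = c * b := c5
  have C35t : ∀ t : G, a₂ * (c * t) = c * (a₂ * t) := fun t => by rw [← mul_assoc, c6, mul_assoc]
  have C35n : a₂ * c = c * a₂ := c6
  refine ⟨?_, ?_, ?_, ?_, ?_⟩
  · rw [mul_inv_eq_iff_eq_mul]
    simp only [mul_assoc]
    rw [B12t (a₁), B23t (a₁ * (b * (a₁))), C13t (b * (a₂ * (a₁ * (b * (a₁))))), B34t (a₁ * (b * (a₂ * (a₁ * (b * (a₁)))))), C24t (a₂ * (b₁ * (a₁ * (b * (a₂ * (a₁ * (b * (a₁)))))))), C14t (b * (a₂ * (b₁ * (a₁ * (b * (a₂ * (a₁ * (b * (a₁))))))))), B45t (a₁ * (b * (a₂ * (b₁ * (a₁ * (b * (a₂ * (a₁ * (b * (a₁)))))))))), C35t (b₁ * (c * (a₁ * (b * (a₂ * (b₁ * (a₁ * (b * (a₂ * (a₁ * (b * (a₁)))))))))))), C25t (a₂ * (b₁ * (c * (a₁ * (b * (a₂ *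 (b₁ * (a₁ * (b * (a₂ * (a₁ * (b * (a₁))))))))))))), C15t (b * (a₂ * (b₁ * (c * (a₁ * (b * (a₂ * (b₁ * (a₁ * (b * (a₂ * (a₁ * (b * (a₁))))))))))))))]
  · rw [mul_inv_eq_iff_eq_mul]
    simp only [mul_assoc]
    rw [(C13t (b * (a₁ * (b)))).symm, B12t (a₂ * (b * (a₁ * (b)))), (C24t (a₁ * (b * (a₂ * (b * (a₁ * (b))))))).symm, B23t (b₁ * (a₁ * (b * (a₂ * (b * (a₁ * (b))))))), (B12n).symm, C13t (b * (a₂ * (b₁ * (a₁ * (b * (a₂ * (a₁ * (b * (a₁))))))))), (C35t (a₁ * (b * (a₂ * (b₁ * (a₁ * (b * (a₂ * (a₁ * (b * (a₁))))))))))).symm, B34t (c * (a₁ * (b * (a₂ * (b₁ * (a₁ * (b * (a₂ * (a₁ * (b * (a₁))))))))))), C24t (a₂ * (b₁ * (c * (a₁ * (b * (a₂ * (b₁ * (a₁ * (b * (a₂ * (a₁ * (b * (a₁))))))))))))), C14t (b * (a₂ * (b₁ * (c * (a₁ * (b * (a₂ * (b₁ * (a₁ * (b * (a₂ * (a₁ *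 (b * (a₁))))))))))))))]
  · rw [mul_inv_eq_iff_eq_mul]
    simp only [mul_assoc]
    rw [(C14t (b * (a₂ * (a₁ * (b * (a₁ * (a₂))))))).symm, (C13t (b₁ * (b * (a₂ * (a₁ * (b * (a₁ * (a₂)))))))).symm, (C13t (b * (a₁ * (a₂)))).symm, C13n, (B23t (a₁)).symm, (B12t (a₂ * (b * (a₁)))).symm, B12t (a₂ * (b₁ * (a₁ * (b * (a₁ * (a₂ * (b * (a₁)))))))), (C25t (a₁ * (b * (a₂ * (b₁ * (a₁ * (b * (a₁ * (a₂ * (b * (a₁))))))))))).symm, (C24t (c * (a₁ * (b * (a₂ * (b₁ * (a₁ * (b * (a₁ * (a₂ * (b * (a₁)))))))))))).symm, B23t (b₁ * (c * (a₁ * (b * (a₂ * (b₁ * (a₁ * (b * (a₁ * (a₂ * (b * (a₁)))))))))))), C13t (b * (a₁)), C13t (b * (a₂ * (b₁ * (c * (a₁ * (b * (a₂ * (b₁ * (a₁ * (b * (a₂ * (a₁ * (b * (a₁))))))))))))))]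
  · rw [mul_inv_eq_iff_eq_mul]
    simp only [mul_assoc]
    rw [(C14t (b * (a₂ * (a₁ * (b * (a₁ * (b₁))))))).symm, (C13t (b₁ * (b * (a₂ * (a₁ * (b * (a₁ * (b₁)))))))).symm, (C24t (a₂ * (a₁ * (b * (a₁ * (b₁)))))).symm, C14n, C24t (a₁), C14t (b * (a₁)), (B34t (a₁ * (b * (a₁)))).symm, (B23t (b₁ * (a₂ * (a₁ * (b * (a₁)))))).symm, (B12t (a₂ * (b * (b₁ * (a₂ * (a₁ * (b * (a₁)))))))).symm, (C15t (a₁ * (b * (a₁ * (a₂ * (b * (b₁ * (a₂ * (a₁ * (b * (a₁))))))))))).symm, (C14t (c * (a₁ * (b * (a₁ * (a₂ * (b * (b₁ * (a₂ * (a₁ * (b * (a₁)))))))))))).symm, (C13t (b₁ * (c * (a₁ * (b * (a₁ * (a₂ * (b * (b₁ * (a₂ * (a₁ * (b * (a₁))))))))))))).symm, B12t (a₂ * (b₁ * (c * (a₁ * (b * (a₁ * (a₂ * (b * (b₁ * (a₂ * (a₁ * (b * (a₁))))))))))))), C24t (a₂ * (a₁ * (b * (a₁)))), C13t (b₁ *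 (b * (a₂ * (a₁ * (b * (a₁)))))), C14t (b * (a₂ * (a₁ * (b * (a₁)))))]
  · rw [mul_inv_eq_iff_eq_mul]
    simp only [mul_assoc]
    rw [(C15t (b * (a₂ * (b₁ * (a₁ * (b * (a₂ * (a₁ * (b * (a₁ * (c))))))))))).symm, (C14t (c * (b * (a₂ * (b₁ * (a₁ * (b * (a₂ * (a₁ * (b * (a₁ * (c)))))))))))).symm, (C25t (a₂ * (b₁ * (a₁ * (b * (a₂ * (a₁ * (b * (a₁ * (c)))))))))).symm, (C35t (b₁ * (a₁ * (b * (a₂ * (a₁ * (b * (a₁ * (c))))))))).symm, C15n, C25t (a₁), C15t (b * (a₁)), C35t (a₁ * (b * (a₁))), C25t (a₂ * (a₁ * (b * (a₁)))), C15t (b * (a₂ * (a₁ * (b * (a₁))))), (B45t (a₁ * (b * (a₂ * (a₁ * (b * (a₁))))))).symm, (C24t (a₂ * (b₁ * (c * (b₁ * (a₁ * (b * (a₂ * (a₁ * (b * (a₁))))))))))).symm, (B34t (c * (b₁ * (a₁ * (b * (a₂ * (a₁ * (b * (a₁))))))))).symm, (C13t (b * (a₂ * (b₁ * (a₂ * (c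 * (b₁ * (a₁ * (b * (a₂ * (a₁ * (b * (a₁))))))))))))).symm, (B23t (b₁ * (a₂ * (c * (b₁ * (a₁ * (b * (a₂ * (a₁ * (b * (a₁))))))))))).symm, (B12t (a₂ * (b * (b₁ * (a₂ * (c * (b₁ * (a₁ * (b * (a₂ * (a₁ * (b * (a₁))))))))))))).symm, C35t (b₁ * (a₁ * (b * (a₂ * (a₁ * (b * (a₁))))))), C24t (c * (a₂ * (b₁ * (a₁ * (b * (a₂ * (a₁ * (b * (a₁))))))))), C25t (a₂ * (b₁ * (a₁ * (b * (a₂ * (a₁ * (b * (a₁)))))))), C13t (b₁ * (c * (b * (a₂ * (b₁ * (a₁ * (b * (a₂ * (a₁ * (b * (a₁))))))))))), C14t (c * (b * (a₂ * (b₁ * (a₁ * (b * (a₂ * (a₁ * (b * (a₁)))))))))), C15t (b * (a₂ * (b₁ * (a₁ * (b * (a₂ * (a₁ * (b * (a₁)))))))))]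
end

section
/- Let G be a group with elements a₁, b, a₂, b₁, c satisfying the braid relations a₁ba₁ = ba₁b, a₂ba₂ = ba₂b, a₂b₁a₂ = b₁a₂b₁, b₁cb₁ = cb₁c, and commutation for all other pairs among the five. Then (a₁ba₂b₁c)⁶ = (a₁ba₂b₁c)²·b₁a₂ba₁·cb₁a₂b·(a₂b₁c)⁴. -/
theorem stmt_8 (G : Type*) [Group G] (a₁ b a₂ b₁ c : G)
    (h1 : a₁*b*a₁ = b*a₁*b) (h2 : a₂*b*a₂ = b*a₂*b)
    (h3 : a₂*b₁*a₂ = b₁*a₂*b₁) (h4 : b₁*c*b₁ = c*b₁*c)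
    (c1 : a₁*a₂ = a₂*a₁) (c2 : a₁*b₁ = b₁*a₁) (c3 : a₁*c = c*a₁)
    (c4 : b*b₁ = b₁*b) (c5 : b*c = c*b) (c6 : a₂*c = c*a₂) :
    (a₁*b*a₂*b₁*c)^6 = (a₁*b*a₂*b₁*c)^2 * (b₁*a₂*b*a₁) * (c*b₁*a₂*b) * (a₂*b₁*c)^4 := by
  have sw : ∀ x y : G, x*y = y*x → ∀ t : G, x*(y*t) = y*(x*t) := by
    intro x y h t; rw [← mul_assoc, h, mul_assoc]
  have br : ∀ x y : G, x*y*x = y*x*y → ∀ t : G, x*(y*(x*t)) = y*(x*(y*t)) := by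
    intro x y h t; rw [← mul_assoc, ← mul_assoc, h, mul_assoc, mul_assoc]
  have d1 : ∀ t : G, a₁*(b*(a₂*(b₁*(c*(a₁*t))))) = b*(a₁*(b*(a₂*(b₁*(c*t))))) := by
    intro t
    rw [← sw a₁ c c3 t, ← sw a₁ b₁ c2 (c*t), ← sw a₁ a₂ c1 (b₁*(c*t)),
      br a₁ b h1 (a₂*(b₁*(c*t)))]
  have d2 : ∀ t : G, a₁*(b*(a₂*(b₁*(c*(b*t))))) = a₂*(a₁*(b*(a₂*(b₁*(c*t))))) := by
    intro t
    rw [← sw b c c5 t, ← sw b b₁ c4 (c*t), ← br a₂ b h2 (b₁*(c*t)),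
      sw a₁ a₂ c1 (b*(a₂*(b₁*(c*t))))]
  have d3 : ∀ t : G, a₁*(b*(a₂*(b₁*(c*(a₂*t))))) = b₁*(a₁*(b*(a₂*(b₁*(c*t))))) := by
    intro t
    rw [← sw a₂ c c6 t, br a₂ b₁ h3 (c*t), sw b b₁ c4 (a₂*(b₁*(c*t))),
      sw a₁ b₁ c2 (b*(a₂*(b₁*(c*t))))]
  have d4 : ∀ t : G, a₁*(b*(a₂*(b₁*(c*(b₁*t))))) = c*(a₁*(b*(a₂*(b₁*(c*t))))) := by
    intro t
    rw [br b₁ c h4 t, sw a₂ c c6 (b₁*(c*t)), sw b c c5 (a₂*(b₁*(c*t))),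
      sw a₁ c c3 (b*(a₂*(b₁*(c*t))))]
  have key : ∀ t : G,
      a₁*(b*(a₂*(b₁*(c*(a₁*(b*(a₂*(b₁*(c*(a₁*(b*(a₂*(b₁*(c*(a₁*(b*(a₂*(b₁*(c*(t))))))))))))))))))))
      = b₁*(a₂*(b*(a₁*(c*(b₁*(a₂*(b*(a₂*(b₁*(c*(a₂*(b₁*(c*(a₂*(b₁*(c*(a₂*(b₁*(c*(t)))))))))))))))))))) := by
    intro t
    calc a₁*(b*(a₂*(b₁*(c*(a₁*(b*(a₂*(b₁*(c*(a₁*(b*(a₂*(b₁*(c*(a₁*(b*(a₂*(b₁*(c*(t))))))))))))))))))))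
      _ = a₁*(b*(a₂*(b₁*(c*(a₁*(b*(a₂*(b₁*(c*(b*(a₁*(b*(a₂*(b₁*(c*(b*(a₂*(b₁*(c*(t)))))))))))))))))))) := by rw [d1 (b*(a₂*(b₁*(c*(t)))))]
      _ = a₁*(b*(a₂*(b₁*(c*(a₂*(a₁*(b*(a₂*(b₁*(c*(a₁*(b*(a₂*(b₁*(c*(b*(a₂*(b₁*(c*(t)))))))))))))))))))) := by rw [d2 (a₁*(b*(a₂*(b₁*(c*(b*(a₂*(b₁*(c*(t))))))))))]
      _ = b₁*(a₁*(b*(a₂*(b₁*(c*(a₁*(b*(a₂*(b₁*(c*(a₁*(b*(a₂*(b₁*(c*(b*(a₂*(b₁*(c*(t)))))))))))))))))))) := by rw [d3 (a₁*(b*(a₂*(b₁*(c*(a₁*(b*(a₂*(b₁*(c*(b*(a₂*(b₁*(c*(t)))))))))))))))]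
      _ = b₁*(a₁*(b*(a₂*(b₁*(c*(a₁*(b*(a₂*(b₁*(c*(a₂*(a₁*(b*(a₂*(b₁*(c*(a₂*(b₁*(c*(t)))))))))))))))))))) := by rw [d2 (a₂*(b₁*(c*(t))))]
      _ = b₁*(a₁*(b*(a₂*(b₁*(c*(b₁*(a₁*(b*(a₂*(b₁*(c*(a₁*(b*(a₂*(b₁*(c*(a₂*(b₁*(c*(t)))))))))))))))))))) := by rw [d3 (a₁*(b*(a₂*(b₁*(c*(a₂*(b₁*(c*(t)))))))))]
      _ = b₁*(c*(a₁*(b*(a₂*(b₁*(c*(a₁*(b*(a₂*(b₁*(c*(a₁*(b*(a₂*(b₁*(c*(a₂*(b₁*(c*(t)))))))))))))))))))) := by rw [d4 (a₁*(b*(a₂*(b₁*(c*(a₁*(b*(a₂*(b₁*(c*(a₂*(b₁*(c*(t))))))))))))))]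
      _ = b₁*(c*(a₁*(b*(a₂*(b₁*(c*(b*(a₁*(b*(a₂*(b₁*(c*(b*(a₂*(b₁*(c*(a₂*(b₁*(c*(t)))))))))))))))))))) := by rw [d1 (b*(a₂*(b₁*(c*(a₂*(b₁*(c*(t))))))))]
      _ = b₁*(c*(a₂*(a₁*(b*(a₂*(b₁*(c*(a₁*(b*(a₂*(b₁*(c*(b*(a₂*(b₁*(c*(a₂*(b₁*(c*(t)))))))))))))))))))) := by rw [d2 (a₁*(b*(a₂*(b₁*(c*(b*(a₂*(b₁*(c*(a₂*(b₁*(c*(t)))))))))))))]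
      _ = b₁*(c*(a₂*(a₁*(b*(a₂*(b₁*(c*(a₂*(a₁*(b*(a₂*(b₁*(c*(a₂*(b₁*(c*(a₂*(b₁*(c*(t)))))))))))))))))))) := by rw [d2 (a₂*(b₁*(c*(a₂*(b₁*(c*(t)))))))]
      _ = b₁*(c*(a₂*(b₁*(a₁*(b*(a₂*(b₁*(c*(a₁*(b*(a₂*(b₁*(c*(a₂*(b₁*(c*(a₂*(b₁*(c*(t)))))))))))))))))))) := by rw [d3 (a₁*(b*(a₂*(b₁*(c*(a₂*(b₁*(c*(a₂*(b₁*(c*(t))))))))))))]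
      _ = b₁*(c*(a₂*(b₁*(b*(a₁*(b*(a₂*(b₁*(c*(b*(a₂*(b₁*(c*(a₂*(b₁*(c*(a₂*(b₁*(c*(t)))))))))))))))))))) := by rw [d1 (b*(a₂*(b₁*(c*(a₂*(b₁*(c*(a₂*(b₁*(c*(t)))))))))))]
      _ = b₁*(c*(a₂*(b₁*(b*(a₂*(a₁*(b*(a₂*(b₁*(c*(a₂*(b₁*(c*(a₂*(b₁*(c*(a₂*(b₁*(c*(t)))))))))))))))))))) := by rw [d2 (a₂*(b₁*(c*(a₂*(b₁*(c*(a₂*(b₁*(c*(t))))))))))]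
      _ = b₁*(a₂*(c*(b₁*(b*(a₂*(a₁*(b*(a₂*(b₁*(c*(a₂*(b₁*(c*(a₂*(b₁*(c*(a₂*(b₁*(c*(t)))))))))))))))))))) := by rw [← sw a₂ c c6 (b₁*(b*(a₂*(a₁*(b*(a₂*(b₁*(c*(a₂*(b₁*(c*(a₂*(b₁*(c*(a₂*(b₁*(c*(t))))))))))))))))))]
      _ = b₁*(a₂*(c*(b*(b₁*(a₂*(a₁*(b*(a₂*(b₁*(c*(a₂*(b₁*(c*(a₂*(b₁*(c*(a₂*(b₁*(c*(t)))))))))))))))))))) := by rw [← sw b b₁ c4 (a₂*(a₁*(b*(a₂*(b₁*(c*(a₂*(b₁*(c*(a₂*(b₁*(c*(a₂*(b₁*(c*(t))))))))))))))))]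
      _ = b₁*(a₂*(b*(c*(b₁*(a₂*(a₁*(b*(a₂*(b₁*(c*(a₂*(b₁*(c*(a₂*(b₁*(c*(a₂*(b₁*(c*(t)))))))))))))))))))) := by rw [← sw b c c5 (b₁*(a₂*(a₁*(b*(a₂*(b₁*(c*(a₂*(b₁*(c*(a₂*(b₁*(c*(a₂*(b₁*(c*(t)))))))))))))))))]
      _ = b₁*(a₂*(b*(c*(b₁*(a₁*(a₂*(b*(a₂*(b₁*(c*(a₂*(b₁*(c*(a₂*(b₁*(c*(a₂*(b₁*(c*(t)))))))))))))))))))) := by rw [← sw a₁ a₂ c1 (b*(a₂*(b₁*(c*(a₂*(b₁*(c*(a₂*(b₁*(c*(a₂*(b₁*(c*(t))))))))))))))]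
      _ = b₁*(a₂*(b*(c*(a₁*(b₁*(a₂*(b*(a₂*(b₁*(c*(a₂*(b₁*(c*(a₂*(b₁*(c*(a₂*(b₁*(c*(t)))))))))))))))))))) := by rw [← sw a₁ b₁ c2 (a₂*(b*(a₂*(b₁*(c*(a₂*(b₁*(c*(a₂*(b₁*(c*(a₂*(b₁*(c*(t)))))))))))))))]
      _ = b₁*(a₂*(b*(a₁*(c*(b₁*(a₂*(b*(a₂*(b₁*(c*(a₂*(b₁*(c*(a₂*(b₁*(c*(a₂*(b₁*(c*(t)))))))))))))))))))) := by rw [← sw a₁ c c3 (b₁*(a₂*(b*(a₂*(b₁*(c*(a₂*(b₁*(c*(a₂*(b₁*(c*(a₂*(b₁*(c*(t))))))))))))))))]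
  have h := key 1
  simp only [mul_one] at h
  calc (a₁*b*a₂*b₁*c)^6
      = (a₁*b*a₂*b₁*c)^2 *
        (a₁*(b*(a₂*(b₁*(c*(a₁*(b*(a₂*(b₁*(c*(a₁*(b*(a₂*(b₁*(c*(a₁*(b*(a₂*(b₁*(c)))))))))))))))))))) := by
        simp only [pow_succ, pow_zero, one_mul, mul_assoc]
    _ = (a₁*b*a₂*b₁*c)^2 *
        (b₁*(a₂*(b*(a₁*(c*(b₁*(a₂*(b*(a₂*(b₁*(c*(a₂*(b₁*(c*(a₂*(b₁*(c*(a₂*(b₁*(c)))))))))))))))))))) := by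
        rw [h]
    _ = (a₁*b*a₂*b₁*c)^2 * (b₁*a₂*b*a₁) * (c*b₁*a₂*b) * (a₂*b₁*c)^4 := by simp only [pow_succ, pow_zero, one_mul, mul_assoc]
end

section
/- Let G be a group with elements a₁, b, a₂, b₁, c satisfying the braid relations a₁ba₁ = ba₁b, a₂ba₂ = ba₂b, a₂b₁a₂ = b₁a₂b₁, b₁cb₁ = cb₁c, commutation for all other pairs, and (a₁a₁a₂b)³ = c². Then the element r₁ = a₁a₁ba₁a₁b satisfies r₁a₂r₁a₂ = (a₁a₁a₂b)³a₁a₁ = cca₁a₁. -/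
theorem stmt_9 (G : Type*) [Group G] (a₁ b a₂ b₁ c : G)
    (h1 : a₁*b*a₁ = b*a₁*b) (h2 : a₂*b*a₂ = b*a₂*b)
    (h3 : a₂*b₁*a₂ = b₁*a₂*b₁) (h4 : b₁*c*b₁ = c*b₁*c)
    (c1 : a₁*a₂ = a₂*a₁) (c2 : a₁*b₁ = b₁*a₁) (c3 : a₁*c = c*a₁)
    (c4 : b*b₁ = b₁*b) (c5 : b*c = c*b) (c6 : a₂*c = c*a₂)
    (star : (a₁*a₁*a₂*b)^3 = c^2) :
    (a₁*a₁*b*a₁*a₁*b)*a₂*(a₁*a₁*b*a₁*a₁*b)*a₂ = (a₁*a₁*a₂*b)^3*a₁*a₁ ∧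
    (a₁*a₁*a₂*b)^3*a₁*a₁ = c*c*a₁*a₁ := by
  have rABf : ∀ x : G, a₁*(b*(a₁*x)) = b*(a₁*(b*x)) := by
    intro x; simp only [← mul_assoc]; rw [h1]
  have rABb : ∀ x : G, b*(a₁*(b*x)) = a₁*(b*(a₁*x)) := fun x => (rABf x).symm
  have rCBf : ∀ x : G, a₂*(b*(a₂*x)) = b*(a₂*(b*x)) := by
    intro x; simp only [← mul_assoc]; rw [h2]
  have rCBb : ∀ x : G, b*(a₂*(b*x)) = a₂*(b*(a₂*x)) := fun x => (rCBf x).symm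
  have rACf : ∀ x : G, a₁*(a₂*x) = a₂*(a₁*x) := by
    intro x; simp only [← mul_assoc]; rw [c1]
  have rACb : ∀ x : G, a₂*(a₁*x) = a₁*(a₂*x) := fun x => (rACf x).symm
  constructor
  · calc (a₁*a₁*b*a₁*a₁*b)*a₂*(a₁*a₁*b*a₁*a₁*b)*a₂
        = a₁*(a₁*(b*(a₁*(a₁*(b*(a₂*(a₁*(a₁*(b*(a₁*(a₁*(b*(a₂))))))))))))) := by simp only [mul_assoc]
      _ = a₁*(a₁*(b*(a₁*(a₁*(b*(a₂*(a₁*(b*(a₁*(b*(a₁*(b*(a₂))))))))))))) := by rw [show a₁*(b*(a₁*(a₁*(b*(a₂))))) = b*(a₁*(b*(a₁*(b*(a₂))))) from rABf (a₁*(b*(a₂)))]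
      _ = a₁*(a₁*(b*(a₁*(a₁*(b*(a₂*(b*(a₁*(b*(b*(a₁*(b*(a₂))))))))))))) := by rw [show a₁*(b*(a₁*(b*(a₁*(b*(a₂)))))) = b*(a₁*(b*(b*(a₁*(b*(a₂)))))) from rABf (b*(a₁*(b*(a₂))))]
      _ = a₁*(a₁*(b*(a₁*(a₁*(b*(a₂*(b*(a₁*(b*(a₁*(b*(a₁*(a₂))))))))))))) := by rw [show b*(a₁*(b*(a₂))) = a₁*(b*(a₁*(a₂))) from rABb (a₂)]
      _ = a₁*(a₁*(b*(a₁*(a₁*(b*(a₂*(b*(a₁*(a₁*(b*(a₁*(a₁*(a₂))))))))))))) := by rw [show b*(a₁*(b*(a₁*(a₂)))) = a₁*(b*(a₁*(a₁*(a₂)))) from rABb (a₁*(a₂))]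
      _ = a₁*(a₁*(b*(a₁*(a₁*(a₂*(b*(a₂*(a₁*(a₁*(b*(a₁*(a₁*(a₂))))))))))))) := by rw [show b*(a₂*(b*(a₁*(a₁*(b*(a₁*(a₁*(a₂)))))))) = a₂*(b*(a₂*(a₁*(a₁*(b*(a₁*(a₁*(a₂)))))))) from rCBb (a₁*(a₁*(b*(a₁*(a₁*(a₂))))))]
      _ = a₁*(a₁*(b*(a₁*(a₂*(a₁*(b*(a₂*(a₁*(a₁*(b*(a₁*(a₁*(a₂))))))))))))) := by rw [show a₁*(a₂*(b*(a₂*(a₁*(a₁*(b*(a₁*(a₁*(a₂))))))))) = a₂*(a₁*(b*(a₂*(a₁*(a₁*(b*(a₁*(a₁*(a₂))))))))) from rACf (b*(a₂*(a₁*(a₁*(b*(a₁*(a₁*(a₂))))))))]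
      _ = a₁*(a₁*(b*(a₂*(a₁*(a₁*(b*(a₂*(a₁*(a₁*(b*(a₁*(a₁*(a₂))))))))))))) := by rw [show a₁*(a₂*(a₁*(b*(a₂*(a₁*(a₁*(b*(a₁*(a₁*(a₂)))))))))) = a₂*(a₁*(a₁*(b*(a₂*(a₁*(a₁*(b*(a₁*(a₁*(a₂)))))))))) from rACf (a₁*(b*(a₂*(a₁*(a₁*(b*(a₁*(a₁*(a₂)))))))))]
      _ = a₁*(a₁*(b*(a₂*(a₁*(a₁*(b*(a₂*(a₁*(a₁*(b*(a₁*(a₂*(a₁))))))))))))) := by rw [show a₁*(a₂) = a₂*(a₁) from c1]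
      _ = a₁*(a₁*(b*(a₂*(a₁*(a₁*(b*(a₂*(a₁*(a₁*(b*(a₂*(a₁*(a₁))))))))))))) := by rw [show a₁*(a₂*(a₁)) = a₂*(a₁*(a₁)) from rACf (a₁)]
      _ = a₁*(a₁*(b*(a₂*(a₁*(a₁*(b*(a₁*(a₂*(a₁*(b*(a₂*(a₁*(a₁))))))))))))) := by rw [show a₂*(a₁*(a₁*(b*(a₂*(a₁*(a₁)))))) = a₁*(a₂*(a₁*(b*(a₂*(a₁*(a₁)))))) from rACb (a₁*(b*(a₂*(a₁*(a₁)))))]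
      _ = a₁*(a₁*(b*(a₂*(a₁*(b*(a₁*(b*(a₂*(a₁*(b*(a₂*(a₁*(a₁))))))))))))) := by rw [show a₁*(b*(a₁*(a₂*(a₁*(b*(a₂*(a₁*(a₁)))))))) = b*(a₁*(b*(a₂*(a₁*(b*(a₂*(a₁*(a₁)))))))) from rABf (a₂*(a₁*(b*(a₂*(a₁*(a₁))))))]
      _ = a₁*(a₁*(b*(a₂*(b*(a₁*(b*(b*(a₂*(a₁*(b*(a₂*(a₁*(a₁))))))))))))) := by rw [show a₁*(b*(a₁*(b*(a₂*(a₁*(b*(a₂*(a₁*(a₁))))))))) = b*(a₁*(b*(b*(a₂*(a₁*(b*(a₂*(a₁*(a₁))))))))) from rABf (b*(a₂*(a₁*(b*(a₂*(a₁*(a₁)))))))]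
      _ = a₁*(a₁*(a₂*(b*(a₂*(a₁*(b*(b*(a₂*(a₁*(b*(a₂*(a₁*(a₁))))))))))))) := by rw [show b*(a₂*(b*(a₁*(b*(b*(a₂*(a₁*(b*(a₂*(a₁*(a₁))))))))))) = a₂*(b*(a₂*(a₁*(b*(b*(a₂*(a₁*(b*(a₂*(a₁*(a₁))))))))))) from rCBb (a₁*(b*(b*(a₂*(a₁*(b*(a₂*(a₁*(a₁)))))))))]
      _ = a₁*(a₁*(a₂*(b*(a₁*(a₂*(b*(b*(a₂*(a₁*(b*(a₂*(a₁*(a₁))))))))))))) := by rw [show a₂*(a₁*(b*(b*(a₂*(a₁*(b*(a₂*(a₁*(a₁))))))))) = a₁*(a₂*(b*(b*(a₂*(a₁*(b*(a₂*(a₁*(a₁))))))))) from rACb (b*(b*(a₂*(a₁*(b*(a₂*(a₁*(a₁))))))))]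
      _ = a₁*(a₁*(a₂*(b*(a₁*(a₂*(b*(b*(a₁*(a₂*(b*(a₂*(a₁*(a₁))))))))))))) := by rw [show a₂*(a₁*(b*(a₂*(a₁*(a₁))))) = a₁*(a₂*(b*(a₂*(a₁*(a₁))))) from rACb (b*(a₂*(a₁*(a₁))))]
      _ = a₁*(a₁*(a₂*(b*(a₁*(a₂*(b*(b*(a₁*(b*(a₂*(b*(a₁*(a₁))))))))))))) := by rw [show a₂*(b*(a₂*(a₁*(a₁)))) = b*(a₂*(b*(a₁*(a₁)))) from rCBf (a₁*(a₁))]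
      _ = a₁*(a₁*(a₂*(b*(a₁*(a₂*(b*(a₁*(b*(a₁*(a₂*(b*(a₁*(a₁))))))))))))) := by rw [show b*(a₁*(b*(a₂*(b*(a₁*(a₁)))))) = a₁*(b*(a₁*(a₂*(b*(a₁*(a₁)))))) from rABb (a₂*(b*(a₁*(a₁))))]
      _ = a₁*(a₁*(a₂*(b*(a₁*(a₂*(a₁*(b*(a₁*(a₁*(a₂*(b*(a₁*(a₁))))))))))))) := by rw [show b*(a₁*(b*(a₁*(a₂*(b*(a₁*(a₁))))))) = a₁*(b*(a₁*(a₁*(a₂*(b*(a₁*(a₁))))))) from rABb (a₁*(a₂*(b*(a₁*(a₁)))))]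
      _ = a₁*(a₁*(a₂*(b*(a₁*(a₁*(a₂*(b*(a₁*(a₁*(a₂*(b*(a₁*(a₁))))))))))))) := by rw [show a₂*(a₁*(b*(a₁*(a₁*(a₂*(b*(a₁*(a₁)))))))) = a₁*(a₂*(b*(a₁*(a₁*(a₂*(b*(a₁*(a₁)))))))) from rACb (b*(a₁*(a₁*(a₂*(b*(a₁*(a₁)))))))]
      _ = (a₁*a₁*a₂*b)^3*a₁*a₁ := by simp only [pow_succ, pow_zero, one_mul, mul_assoc]
  · rw [star, pow_two, mul_assoc c c, ← mul_assoc]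
end

section
/- Let G be a group with elements a₁, b, a₂, b₁, c satisfying the braid relations a₁ba₁ = ba₁b, a₂ba₂ = ba₂b, a₂b₁a₂ = b₁a₂b₁, b₁cb₁ = cb₁c, commutation for all other pairs, and (a₁a₁a₂b)³ = c². Let r₁ = a₁a₁ba₁a₁b and r₂ = ccb₁ccb₁. Then r₁a₂r₁⁻¹ = r₂a₂r₂⁻¹. -/
set_option maxHeartbeats 1000000 in
theorem stmt_10 (G : Type*) [Group G] (a₁ b a₂ b₁ c : G)
    (h1 : a₁*b*a₁ = b*a₁*b) (h2 : a₂*b*a₂ = b*a₂*b)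
    (h3 : a₂*b₁*a₂ = b₁*a₂*b₁) (h4 : b₁*c*b₁ = c*b₁*c)
    (c1 : a₁*a₂ = a₂*a₁) (c2 : a₁*b₁ = b₁*a₁) (c3 : a₁*c = c*a₁)
    (c4 : b*b₁ = b₁*b) (c5 : b*c = c*b) (c6 : a₂*c = c*a₂)
    (star : (a₁*a₁*a₂*b)^3 = c^2) :
    (a₁*a₁*b*a₁*a₁*b)*a₂*(a₁*a₁*b*a₁*a₁*b)⁻¹ = (c*c*b₁*c*c*b₁)*a₂*(c*c*b₁*c*c*b₁)⁻¹ := by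
  -- word identity (D): (a₁²a₂b)³ = (a₁²ba₁²b)·(a₂ba₁²ba₂)
  have hD : a₁*a₁*a₂*b*a₁*a₁*a₂*b*a₁*a₁*a₂*b = a₁*a₁*b*a₁*a₁*b*a₂*b*a₁*a₁*b*a₂ := by
    calc a₁*a₁*a₂*b*a₁*a₁*a₂*b*a₁*a₁*a₂*b
      _ = a₁*a₁*a₂*b*a₁*a₂*a₁*b*a₁*a₁*a₂*b := by
        rw [show a₁*a₁*a₂*b*a₁*a₁*a₂*b*a₁*a₁*a₂*b = a₁*a₁*a₂*b*a₁*(a₁*a₂)*b*a₁*a₁*a₂*b from by simp only [mul_assoc], show a₁*a₁*a₂*b*a₁*a₂*a₁*b*a₁*a₁*a₂*b = a₁*a₁*a₂*b*a₁*(a₂*a₁)*b*a₁*a₁*a₂*b from by simp only [mul_assoc], c1]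
      _ = a₁*a₁*a₂*b*a₁*a₂*b*a₁*b*a₁*a₂*b := by
        rw [show a₁*a₁*a₂*b*a₁*a₂*a₁*b*a₁*a₁*a₂*b = a₁*a₁*a₂*b*a₁*a₂*(a₁*b*a₁)*a₁*a₂*b from by simp only [mul_assoc], show a₁*a₁*a₂*b*a₁*a₂*b*a₁*b*a₁*a₂*b = a₁*a₁*a₂*b*a₁*a₂*(b*a₁*b)*a₁*a₂*b from by simp only [mul_assoc], h1]
      _ = a₁*a₁*a₂*b*a₁*a₂*b*b*a₁*b*a₂*b := by
        rw [show a₁*a₁*a₂*b*a₁*a₂*b*a₁*b*a₁*a₂*b = a₁*a₁*a₂*b*a₁*a₂*b*(a₁*b*a₁)*a₂*b from by simp only [mul_assoc], show a₁*a₁*a₂*b*a₁*a₂*b*b*a₁*b*a₂*b = a₁*a₁*a₂*b*a₁*a₂*b*(b*a₁*b)*a₂*b from by simp only [mul_assoc], h1]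
      _ = a₁*a₁*a₂*b*a₁*a₂*b*b*a₁*a₂*b*a₂ := by
        rw [show a₁*a₁*a₂*b*a₁*a₂*b*b*a₁*b*a₂*b = a₁*a₁*a₂*b*a₁*a₂*b*b*a₁*(b*a₂*b) from by simp only [mul_assoc], show a₁*a₁*a₂*b*a₁*a₂*b*b*a₁*a₂*b*a₂ = a₁*a₁*a₂*b*a₁*a₂*b*b*a₁*(a₂*b*a₂) from by simp only [mul_assoc], h2]
      _ = a₁*a₁*a₂*b*a₂*a₁*b*b*a₁*a₂*b*a₂ := by
        rw [show a₁*a₁*a₂*b*a₁*a₂*b*b*a₁*a₂*b*a₂ = a₁*a₁*a₂*b*(a₁*a₂)*b*b*a₁*a₂*b*a₂ from by simp only [mul_assoc], show a₁*a₁*a₂*b*a₂*a₁*b*b*a₁*a₂*b*a₂ = a₁*a₁*a₂*b*(a₂*a₁)*b*b*a₁*a₂*b*a₂ from by simp only [mul_assoc], c1]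
      _ = a₁*a₁*b*a₂*b*a₁*b*b*a₁*a₂*b*a₂ := by
        rw [show a₁*a₁*a₂*b*a₂*a₁*b*b*a₁*a₂*b*a₂ = a₁*a₁*(a₂*b*a₂)*a₁*b*b*a₁*a₂*b*a₂ from by simp only [mul_assoc], show a₁*a₁*b*a₂*b*a₁*b*b*a₁*a₂*b*a₂ = a₁*a₁*(b*a₂*b)*a₁*b*b*a₁*a₂*b*a₂ from by simp only [mul_assoc], h2]
      _ = a₁*a₁*b*a₂*a₁*b*a₁*b*a₁*a₂*b*a₂ := by
        rw [show a₁*a₁*b*a₂*b*a₁*b*b*a₁*a₂*b*a₂ = a₁*a₁*b*a₂*(b*a₁*b)*b*a₁*a₂*b*a₂ from by simp only [mul_assoc], show a₁*a₁*b*a₂*a₁*b*a₁*b*a₁*a₂*b*a₂ = a₁*a₁*b*a₂*(a₁*b*a₁)*b*a₁*a₂*b*a₂ from by simp only [mul_assoc], h1]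
      _ = a₁*a₁*b*a₂*a₁*a₁*b*a₁*a₁*a₂*b*a₂ := by
        rw [show a₁*a₁*b*a₂*a₁*b*a₁*b*a₁*a₂*b*a₂ = a₁*a₁*b*a₂*a₁*(b*a₁*b)*a₁*a₂*b*a₂ from by simp only [mul_assoc], show a₁*a₁*b*a₂*a₁*a₁*b*a₁*a₁*a₂*b*a₂ = a₁*a₁*b*a₂*a₁*(a₁*b*a₁)*a₁*a₂*b*a₂ from by simp only [mul_assoc], h1]
      _ = a₁*a₁*b*a₂*a₁*a₁*b*a₁*a₂*a₁*b*a₂ := by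
        rw [show a₁*a₁*b*a₂*a₁*a₁*b*a₁*a₁*a₂*b*a₂ = a₁*a₁*b*a₂*a₁*a₁*b*a₁*(a₁*a₂)*b*a₂ from by simp only [mul_assoc], show a₁*a₁*b*a₂*a₁*a₁*b*a₁*a₂*a₁*b*a₂ = a₁*a₁*b*a₂*a₁*a₁*b*a₁*(a₂*a₁)*b*a₂ from by simp only [mul_assoc], c1]
      _ = a₁*a₁*b*a₂*a₁*a₁*b*a₂*a₁*a₁*b*a₂ := by
        rw [show a₁*a₁*b*a₂*a₁*a₁*b*a₁*a₂*a₁*b*a₂ = a₁*a₁*b*a₂*a₁*a₁*b*(a₁*a₂)*a₁*b*a₂ from by simp only [mul_assoc], show a₁*a₁*b*a₂*a₁*a₁*b*a₂*a₁*a₁*b*a₂ = a₁*a₁*b*a₂*a₁*a₁*b*(a₂*a₁)*a₁*b*a₂ from by simp only [mul_assoc], c1]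
      _ = a₁*a₁*b*a₁*a₂*a₁*b*a₂*a₁*a₁*b*a₂ := by
        rw [show a₁*a₁*b*a₂*a₁*a₁*b*a₂*a₁*a₁*b*a₂ = a₁*a₁*b*(a₂*a₁)*a₁*b*a₂*a₁*a₁*b*a₂ from by simp only [mul_assoc], show a₁*a₁*b*a₁*a₂*a₁*b*a₂*a₁*a₁*b*a₂ = a₁*a₁*b*(a₁*a₂)*a₁*b*a₂*a₁*a₁*b*a₂ from by simp only [mul_assoc], c1]
      _ = a₁*a₁*b*a₁*a₁*a₂*b*a₂*a₁*a₁*b*a₂ := by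
        rw [show a₁*a₁*b*a₁*a₂*a₁*b*a₂*a₁*a₁*b*a₂ = a₁*a₁*b*a₁*(a₂*a₁)*b*a₂*a₁*a₁*b*a₂ from by simp only [mul_assoc], show a₁*a₁*b*a₁*a₁*a₂*b*a₂*a₁*a₁*b*a₂ = a₁*a₁*b*a₁*(a₁*a₂)*b*a₂*a₁*a₁*b*a₂ from by simp only [mul_assoc], c1]
      _ = a₁*a₁*b*a₁*a₁*b*a₂*b*a₁*a₁*b*a₂ := by
        rw [show a₁*a₁*b*a₁*a₁*a₂*b*a₂*a₁*a₁*b*a₂ = a₁*a₁*b*a₁*a₁*(a₂*b*a₂)*a₁*a₁*b*a₂ from by simp only [mul_assoc], show a₁*a₁*b*a₁*a₁*b*a₂*b*a₁*a₁*b*a₂ = a₁*a₁*b*a₁*a₁*(b*a₂*b)*a₁*a₁*b*a₂ from by simp only [mul_assoc], h2]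
  -- word identity (T): τ = b₁·a₂ba₁²ba₂·b₁ commutes with a₂
  have hT : a₂*b₁*a₂*b*a₁*a₁*b*a₂*b₁ = b₁*a₂*b*a₁*a₁*b*a₂*b₁*a₂ := by
    calc a₂*b₁*a₂*b*a₁*a₁*b*a₂*b₁
      _ = b₁*a₂*b₁*b*a₁*a₁*b*a₂*b₁ := by
        rw [show a₂*b₁*a₂*b*a₁*a₁*b*a₂*b₁ = (a₂*b₁*a₂)*b*a₁*a₁*b*a₂*b₁ from by simp only [mul_assoc], show b₁*a₂*b₁*b*a₁*a₁*b*a₂*b₁ = (b₁*a₂*b₁)*b*a₁*a₁*b*a₂*b₁ from by simp only [mul_assoc], h3]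
      _ = b₁*a₂*b*b₁*a₁*a₁*b*a₂*b₁ := by
        rw [show b₁*a₂*b₁*b*a₁*a₁*b*a₂*b₁ = b₁*a₂*(b₁*b)*a₁*a₁*b*a₂*b₁ from by simp only [mul_assoc], show b₁*a₂*b*b₁*a₁*a₁*b*a₂*b₁ = b₁*a₂*(b*b₁)*a₁*a₁*b*a₂*b₁ from by simp only [mul_assoc], c4]
      _ = b₁*a₂*b*a₁*b₁*a₁*b*a₂*b₁ := by
        rw [show b₁*a₂*b*b₁*a₁*a₁*b*a₂*b₁ = b₁*a₂*b*(b₁*a₁)*a₁*b*a₂*b₁ from by simp only [mul_assoc], show b₁*a₂*b*a₁*b₁*a₁*b*a₂*b₁ = b₁*a₂*b*(a₁*b₁)*a₁*b*a₂*b₁ from by simp only [mul_assoc], c2]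
      _ = b₁*a₂*b*a₁*a₁*b₁*b*a₂*b₁ := by
        rw [show b₁*a₂*b*a₁*b₁*a₁*b*a₂*b₁ = b₁*a₂*b*a₁*(b₁*a₁)*b*a₂*b₁ from by simp only [mul_assoc], show b₁*a₂*b*a₁*a₁*b₁*b*a₂*b₁ = b₁*a₂*b*a₁*(a₁*b₁)*b*a₂*b₁ from by simp only [mul_assoc], c2]
      _ = b₁*a₂*b*a₁*a₁*b*b₁*a₂*b₁ := by
        rw [show b₁*a₂*b*a₁*a₁*b₁*b*a₂*b₁ = b₁*a₂*b*a₁*a₁*(b₁*b)*a₂*b₁ from by simp only [mul_assoc], show b₁*a₂*b*a₁*a₁*b*b₁*a₂*b₁ = b₁*a₂*b*a₁*a₁*(b*b₁)*a₂*b₁ from by simp only [mul_assoc], c4]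
      _ = b₁*a₂*b*a₁*a₁*b*a₂*b₁*a₂ := by
        rw [show b₁*a₂*b*a₁*a₁*b*b₁*a₂*b₁ = b₁*a₂*b*a₁*a₁*b*(b₁*a₂*b₁) from by simp only [mul_assoc], show b₁*a₂*b*a₁*a₁*b*a₂*b₁*a₂ = b₁*a₂*b*a₁*a₁*b*(a₂*b₁*a₂) from by simp only [mul_assoc], h3]
  have hc2 : c*c = (a₁*a₁*b*a₁*a₁*b)*(a₂*b*a₁*a₁*b*a₂) := by
    rw [← pow_two, ← star,
      show (a₁*a₁*a₂*b)^3 = a₁*a₁*a₂*b*a₁*a₁*a₂*b*a₁*a₁*a₂*b from by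
        rw [pow_succ, pow_succ, pow_one]; simp only [mul_assoc], hD]
    simp only [mul_assoc]
  have ka₁c : Commute a₁ c := c3
  have kbc : Commute b c := c5
  have ka₂c : Commute a₂ c := c6
  have ka₁b₁ : Commute a₁ b₁ := c2
  have kbb₁ : Commute b b₁ := c4
  have kcr : Commute c (a₁*a₁*b*a₁*a₁*b) :=
    (((((ka₁c.symm.mul_right ka₁c.symm).mul_right kbc.symm).mul_right ka₁c.symm).mul_right
      ka₁c.symm).mul_right kbc.symm)
  have kDr : Commute (c*c) (a₁*a₁*b*a₁*a₁*b) := kcr.mul_left kcr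
  have kDa₂ : Commute (c*c) a₂ := ka₂c.symm.mul_left ka₂c.symm
  have kb₁r : Commute b₁ (a₁*a₁*b*a₁*a₁*b) :=
    (((((ka₁b₁.symm.mul_right ka₁b₁.symm).mul_right kbb₁.symm).mul_right
      ka₁b₁.symm).mul_right ka₁b₁.symm).mul_right kbb₁.symm)
  have hbDb : b₁*(c*c)*b₁ = (a₁*a₁*b*a₁*a₁*b)*(b₁*(a₂*b*a₁*a₁*b*a₂)*b₁) := by
    rw [hc2,
      show b₁*((a₁*a₁*b*a₁*a₁*b)*(a₂*b*a₁*a₁*b*a₂))*b₁ = b₁*(a₁*a₁*b*a₁*a₁*b)*((a₂*b*a₁*a₁*b*a₂)*b₁) from by simp only [mul_assoc],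
      kb₁r.eq]
    simp only [mul_assoc]
  have hτ : (b₁*(a₂*b*a₁*a₁*b*a₂)*b₁)*a₂*(b₁*(a₂*b*a₁*a₁*b*a₂)*b₁)⁻¹ = a₂ := by
    have e : (b₁*(a₂*b*a₁*a₁*b*a₂)*b₁)*a₂ = a₂*(b₁*(a₂*b*a₁*a₁*b*a₂)*b₁) := by
      rw [show (b₁*(a₂*b*a₁*a₁*b*a₂)*b₁)*a₂ = b₁*a₂*b*a₁*a₁*b*a₂*b₁*a₂ from by simp only [mul_assoc],
        show a₂*(b₁*(a₂*b*a₁*a₁*b*a₂)*b₁) = a₂*b₁*a₂*b*a₁*a₁*b*a₂*b₁ from by simp only [mul_assoc]]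
      exact hT.symm
    rw [e, mul_inv_cancel_right]
  have kX : Commute (c*c) ((a₁*a₁*b*a₁*a₁*b)*a₂*(a₁*a₁*b*a₁*a₁*b)⁻¹) :=
    (kDr.mul_right kDa₂).mul_right kDr.inv_right
  symm
  calc (c*c*b₁*c*c*b₁)*a₂*(c*c*b₁*c*c*b₁)⁻¹
      = (c*c)*((b₁*(c*c)*b₁)*a₂*(b₁*(c*c)*b₁)⁻¹)*(c*c)⁻¹ := by
        simp only [mul_inv_rev, mul_assoc]
    _ = (c*c)*(((a₁*a₁*b*a₁*a₁*b)*(b₁*(a₂*b*a₁*a₁*b*a₂)*b₁))*a₂*((a₁*a₁*b*a₁*a₁*b)*(b₁*(a₂*b*a₁*a₁*b*a₂)*b₁))⁻¹)*(c*c)⁻¹ := by rw [hbDb]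
    _ = (c*c)*((a₁*a₁*b*a₁*a₁*b)*((b₁*(a₂*b*a₁*a₁*b*a₂)*b₁)*a₂*(b₁*(a₂*b*a₁*a₁*b*a₂)*b₁)⁻¹)*(a₁*a₁*b*a₁*a₁*b)⁻¹)*(c*c)⁻¹ := by
        simp only [mul_inv_rev, mul_assoc]
    _ = (c*c)*((a₁*a₁*b*a₁*a₁*b)*a₂*(a₁*a₁*b*a₁*a₁*b)⁻¹)*(c*c)⁻¹ := by rw [hτ]
    _ = (a₁*a₁*b*a₁*a₁*b)*a₂*(a₁*a₁*b*a₁*a₁*b)⁻¹ := by rw [kX.eq, mul_inv_cancel_right]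
end

section
/- Let G be a group with elements a, b, c where aba = bab, bcb = cbc, ac = ca. Set t₁ = b·c·a·b (corresponding to b_{g-1}c_{2g-2,2g-1}a_{2g-2}b_{g-1} with the roles a = a_{2g-2}, b = b_{g-1}, c = c_{2g-2,2g-1}). Then the identity (c²ab)³ = c²a²t₁² holds, i.e., t₁² = a⁻²c⁻²(c²ab)³. -/
theorem stmt_15 (G : Type*) [Group G] (a b c : G)
    (h1 : a*b*a = b*a*b) (h2 : b*c*b = c*b*c) (h3 : a*c = c*a) :
    (c^2*a*b)^3 = c^2*a^2*(b*c*a*b)^2 := by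
  have hca : ∀ x : G, c*(a*x) = a*(c*x) := fun x => by
    rw [← mul_assoc, ← h3, mul_assoc]
  have h1' : ∀ x : G, a*(b*(a*x)) = b*(a*(b*x)) := fun x => by
    rw [← mul_assoc, ← mul_assoc, h1, mul_assoc, mul_assoc]
  have h2' : ∀ x : G, b*(c*(b*x)) = c*(b*(c*x)) := fun x => by
    rw [← mul_assoc, ← mul_assoc, h2, mul_assoc, mul_assoc]
  have key : b*(c*(c*(a*(b*(c*(c*(a*b))))))) = a*(b*(c*(a*(b*(b*(c*(a*b))))))) := by
    simp only [hca]
    rw [h1', h2', h2']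
    simp only [hca]
  simp only [pow_succ, pow_zero, one_mul, mul_assoc]
  rw [key]
end

section
/- Let G be a group with elements a, b, B, C satisfying bab = aba, BaB = aBa, BCB = CBC, and the commutations Cb = bC, Bb = bB, Ca = aC. Set t₁ = BCaB. Then (a b t₁) b (a b t₁)⁻¹ = B and (a b t₁) a (a b t₁)⁻¹ = C. -/
theorem stmt_17 (G : Type*) [Group G] (a b B C : G)
    (h1 : a*b*a = b*a*b) (h2 : a*B*a = B*a*B) (h3 : B*C*B = C*B*C)
    (c1 : b*B = B*b) (c2 : b*C = C*b) (c3 : a*C = C*a) :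
    (a*b*(B*C*a*B))*b*(a*b*(B*C*a*B))⁻¹ = B ∧ (a*b*(B*C*a*B))*a*(a*b*(B*C*a*B))⁻¹ = C := by
  have c1' : ∀ x : G, b*(B*x) = B*(b*x) := fun x => by rw [← mul_assoc, c1, mul_assoc]
  have c2' : ∀ x : G, C*(b*x) = b*(C*x) := fun x => by rw [← mul_assoc, ← c2, mul_assoc]
  have c3' : ∀ x : G, C*(a*x) = a*(C*x) := fun x => by rw [← mul_assoc, ← c3, mul_assoc]
  have h1' : ∀ x : G, b*(a*(b*x)) = a*(b*(a*x)) := fun x => by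
    rw [← mul_assoc, ← mul_assoc, ← h1, mul_assoc, mul_assoc]
  have h2' : ∀ x : G, a*(B*(a*x)) = B*(a*(B*x)) := fun x => by
    rw [← mul_assoc, ← mul_assoc, h2, mul_assoc, mul_assoc]
  have h3' : ∀ x : G, B*(C*(B*x)) = C*(B*(C*x)) := fun x => by
    rw [← mul_assoc, ← mul_assoc, h3, mul_assoc, mul_assoc]
  have h2e : a*(B*a) = B*(a*B) := by rw [← mul_assoc, h2, mul_assoc]
  constructor
  · rw [mul_inv_eq_iff_eq_mul]
    simp only [mul_assoc]
    rw [← c1, c3' (b*B), c2' B, c1' (a*(b*(C*B))), h1' (C*B), h2' (b*(a*(C*B))),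
      ← c1' (a*(C*B)), ← c3' B]
  · rw [mul_inv_eq_iff_eq_mul]
    simp only [mul_assoc]
    rw [h2e, h3' (a*B), ← c2' (B*(C*(a*B))), ← c3' (b*(B*(C*(a*B))))]
end

section
/- Let G be a group with elements a, b, B, C satisfying: aba = bab, aBa = BaB, BCB = CBC, and commutations bB = Bb, bC = Cb, aC = Ca. Then with t₁ = BCaB and p = ba²b, the identity abt₁·p·(abt₁)⁻¹ = BC²B holds; equivalently t₁·(ba²b)·t₁⁻¹ = b⁻¹a⁻¹·BC²B·ab. -/
theorem stmt_19 (G : Type*) [Group G] (a b B C : G)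
    (h1 : a*b*a = b*a*b) (h2 : a*B*a = B*a*B) (h3 : B*C*B = C*B*C)
    (c1 : b*B = B*b) (c2 : b*C = C*b) (c3 : a*C = C*a) :
    (a*b*(B*C*a*B))*(b*a^2*b)*(a*b*(B*C*a*B))⁻¹ = B*C^2*B := by
  have L1 : ∀ x : G, b*(B*(x)) = B*(b*(x)) := fun x => by
    simp only [← mul_assoc]; rw [c1]
  have L2 : ∀ x : G, B*(b*(x)) = b*(B*(x)) := fun x => by
    simp only [← mul_assoc]; rw [← c1]
  have L3 : ∀ x : G, b*(C*(x)) = C*(b*(x)) := fun x => by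
    simp only [← mul_assoc]; rw [c2]
  have L4 : ∀ x : G, b*(a*(b*(x))) = a*(b*(a*(x))) := fun x => by
    simp only [← mul_assoc]; rw [← h1]
  have L5 : ∀ x : G, a*(B*(a*(x))) = B*(a*(B*(x))) := fun x => by
    simp only [← mul_assoc]; rw [h2]
  have L6 : B*(b) = b*(B) := c1.symm
  have L7 : ∀ x : G, C*(a*(x)) = a*(C*(x)) := fun x => by
    simp only [← mul_assoc]; rw [← c3]
  have L8 : ∀ x : G, B*(C*(B*(x))) = C*(B*(C*(x))) := fun x => by
    simp only [← mul_assoc]; rw [h3]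
  have L9 : ∀ x : G, a*(C*(x)) = C*(a*(x)) := fun x => by
    simp only [← mul_assoc]; rw [c3]
  have L10 : ∀ x : G, C*(b*(x)) = b*(C*(x)) := fun x => by
    simp only [← mul_assoc]; rw [← c2]
  rw [mul_inv_eq_iff_eq_mul]
  simp only [pow_two, mul_assoc]
  nth_rw 1 [L1]
  nth_rw 2 [L2]
  nth_rw 1 [L3]
  nth_rw 1 [L4]
  nth_rw 1 [L5]
  nth_rw 1 [L5]
  nth_rw 1 [L1]
  nth_rw 1 [L1]
  nth_rw 1 [L6]
  nth_rw 1 [L4]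
  nth_rw 1 [L7]
  nth_rw 1 [L5]
  nth_rw 1 [L8]
  nth_rw 1 [L8]
  nth_rw 1 [L9]
  nth_rw 1 [L9]
  nth_rw 2 [L7]
  nth_rw 1 [L5]
  nth_rw 1 [L10]
  nth_rw 1 [L2]
end
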